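/- With notation as in the context: (1) there exists a real number L such that R·C = L·Q(g,C) (equality of (0,6)-tensors) if and only if μ = 0, or a = 0 and b = 0; and (2) if a = 0 and b = 0 then R·C = (k̃ + c²)·Q(g,C). (This is the pointwise algebraic form of the theorem characterizing Weyl-pseudo-symmetric Wintgen ideal submanifolds, with the displayed identity R·C = (k̃ + c²)Q(g,C).) -/

import Mathlib

noncomputable section

namespace Wintgen

/-- The standard inner product `g` on `ℝ^n`. -/
def gg (n : ℕ) (x y : Fin n → ℝ) : ℝ := ∑ i, x i * y i

/-- The standard orthonormal basis vectors `E_i` (0-indexed). -/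
def E (n : ℕ) (i : Fin n) : Fin n → ℝ := fun j => if j = i then 1 else 0

/-- Auxiliary: the `j`-th coordinate of `x` (0 if out of range). -/
def coord (n : ℕ) (x : Fin n → ℝ) (j : ℕ) : ℝ := if h : j < n then x ⟨j, h⟩ else 0

/-- The Choi–Lu shape operator `A_1`. -/
def A1 (n : ℕ) (a μ : ℝ) (x : Fin n → ℝ) : Fin n → ℝ := fun i =>
  if (i : ℕ) = 0 then a * x i + μ * coord n x 1
  else if (i : ℕ) = 1 then μ * coord n x 0 + a * x i
  else a * x i

/-- The Choi–Lu shape operator `A_2`. -/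
def A2 (n : ℕ) (b μ : ℝ) (x : Fin n → ℝ) : Fin n → ℝ := fun i =>
  if (i : ℕ) = 0 then (b + μ) * x i
  else if (i : ℕ) = 1 then (b - μ) * x i
  else b * x i

/-- The Choi–Lu shape operator `A_3 = c • id`. -/
def A3 (n : ℕ) (c : ℝ) (x : Fin n → ℝ) : Fin n → ℝ := fun i => c * x i

/-- The Gauss-equation curvature tensor `R`. -/
def Rt (n : ℕ) (a b c μ k : ℝ) (X Y Z W : Fin n → ℝ) : ℝ :=
  (gg n (A1 n a μ X) W * gg n (A1 n a μ Y) Z - gg n (A1 n a μ X) Z * gg n (A1 n a μ Y) W)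
  + (gg n (A2 n b μ X) W * gg n (A2 n b μ Y) Z - gg n (A2 n b μ X) Z * gg n (A2 n b μ Y) W)
  + (gg n (A3 n c X) W * gg n (A3 n c Y) Z - gg n (A3 n c X) Z * gg n (A3 n c Y) W)
  + k * (gg n X W * gg n Y Z - gg n X Z * gg n Y W)

/-- The Ricci tensor `Ricc(X,Y) = ∑ i, R(E_i, X, Y, E_i)`. -/
def Ricc (n : ℕ) (a b c μ k : ℝ) (X Y : Fin n → ℝ) : ℝ :=
  ∑ i, Rt n a b c μ k (E n i) X Y (E n i)

/-- The scalar curvature `τ`. -/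
def tau (n : ℕ) (a b c μ k : ℝ) : ℝ := ∑ i, Ricc n a b c μ k (E n i) (E n i)

/-- The Kulkarni–Nomizu product of two bilinear forms. -/
def KN (n : ℕ) (A B : (Fin n → ℝ) → (Fin n → ℝ) → ℝ) (X1 X2 X3 X4 : Fin n → ℝ) : ℝ :=
  A X1 X4 * B X2 X3 + A X2 X3 * B X1 X4 - A X1 X3 * B X2 X4 - A X2 X4 * B X1 X3

/-- The Weyl conformal curvature tensor `C`. -/
def Ct (n : ℕ) (a b c μ k : ℝ) (X Y Z W : Fin n → ℝ) : ℝ :=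
  Rt n a b c μ k X Y Z W
    - (1 / ((n : ℝ) - 2)) * KN n (gg n) (Ricc n a b c μ k) X Y Z W
    + (tau n a b c μ k / (2 * ((n : ℝ) - 1) * ((n : ℝ) - 2))) * KN n (gg n) (gg n) X Y Z W

/-- The endomorphism `(X ∧_A Y)` applied to `Z`. -/
def wedge (n : ℕ) (A : (Fin n → ℝ) → (Fin n → ℝ) → ℝ) (X Y Z : Fin n → ℝ) : Fin n → ℝ :=
  fun j => A Y Z * X j - A X Z * Y j

/-- The endomorphism determined by `g(Op(X,Y)Z, W) = T(X,Y,Z,W)`: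
its `j`-th component is `T(X,Y,Z,E_j)`. -/
def curvOp (n : ℕ) (T : (Fin n → ℝ) → (Fin n → ℝ) → (Fin n → ℝ) → (Fin n → ℝ) → ℝ)
    (X Y Z : Fin n → ℝ) : Fin n → ℝ := fun j => T X Y Z (E n j)

/-- Derivation-type action of a family of operators on a (0,4)-tensor. -/
def dotT (n : ℕ) (Op : (Fin n → ℝ) → (Fin n → ℝ) → (Fin n → ℝ) → (Fin n → ℝ))
    (T : (Fin n → ℝ) → (Fin n → ℝ) → (Fin n → ℝ) → (Fin n → ℝ) → ℝ)
    (X1 X2 X3 X4 X Y : Fin n → ℝ) : ℝ :=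
  - T (Op X Y X1) X2 X3 X4 - T X1 (Op X Y X2) X3 X4
  - T X1 X2 (Op X Y X3) X4 - T X1 X2 X3 (Op X Y X4)

/-- The (0,6)-tensor `R · C`. -/
def RC (n : ℕ) (a b c μ k : ℝ) :=
  dotT n (fun X Y => curvOp n (Rt n a b c μ k) X Y) (Ct n a b c μ k)

/-- The (0,6)-tensor `C · R`. -/
def CR (n : ℕ) (a b c μ k : ℝ) :=
  dotT n (fun X Y => curvOp n (Ct n a b c μ k) X Y) (Rt n a b c μ k)

/-- The Tachibana tensor `Q(A, T)`. -/
def Q (n : ℕ) (A : (Fin n → ℝ) → (Fin n → ℝ) → ℝ)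
    (T : (Fin n → ℝ) → (Fin n → ℝ) → (Fin n → ℝ) → (Fin n → ℝ) → ℝ) :=
  dotT n (fun X Y => wedge n A X Y) T

/-
By the Gauss equation, `R = ½ B₁∧B₁ + ½ B₂∧B₂ + ½ (c² + k̃) g∧g` (Kulkarni–Nomizu products) with
`B₁ = a g + μ p` and `B₂ = b g + μ d`, where `q = planeForm`, `p = swapForm`, `d = diagForm` are
the metric and the two trace-free forms of the plane `E₁E₂`. Since `½ (p∧p + d∧d) = -q∧q`, `R` is
`-μ² q∧q` plus Kulkarni–Nomizu products with `g`; the latter drop out of the Weyl tensor, so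
`C = -μ² W` with `W` the Weyl part of `q∧q`. This settles `μ = 0`.
If `a = b = 0` then `R = ½ (c² + k̃) g∧g - μ² q∧q`, and the operators of `q∧q` are infinitesimal
rotations of the plane, which fix `g` and `q`, hence `W`; so `R·C = (c² + k̃) Q(g, C)`.
Conversely, at `(E₁, E₂, E₁, E₃; E₁, E₃)` and at its rotation by `π/4` in the plane, `Q(g, C)`
vanishes while `R·C` is `-2 (n-3)/(n-2) μ³ a`, resp. `-8 (n-3)/(n-2) μ³ b`.
-/

section

variable {n : ℕ}

lemma gg_comm (x y : Fin n → ℝ) : gg n x y = gg n y x :=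
  Finset.sum_congr rfl fun _ _ => mul_comm _ _

lemma gg_add_left (x y z : Fin n → ℝ) : gg n (x + y) z = gg n x z + gg n y z :=
  add_dotProduct x y z

lemma gg_sub_left (x y z : Fin n → ℝ) : gg n (x - y) z = gg n x z - gg n y z :=
  sub_dotProduct x y z

lemma gg_smul_left (s : ℝ) (x y : Fin n → ℝ) : gg n (s • x) y = s * gg n x y :=
  smul_dotProduct s x y

lemma gg_E_left (i : Fin n) (x : Fin n → ℝ) : gg n (E n i) x = x i := by
  simp [gg, E]

lemma gg_E_right (i : Fin n) (x : Fin n → ℝ) : gg n x (E n i) = x i := by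
  rw [gg_comm, gg_E_left]

lemma gg_E_E (i : Fin n) : gg n (E n i) (E n i) = 1 := by
  simp [gg_E_left, E]

lemma sum_gg_E_E : ∑ i, gg n (E n i) (E n i) = n := by
  simp [gg_E_E]

lemma coord_of_lt {j : ℕ} (h : j < n) (x : Fin n → ℝ) : coord n x j = x ⟨j, h⟩ := dif_pos h

lemma coord_E {j : ℕ} (h : j < n) (i : Fin n) :
    coord n (E n i) j = if (⟨j, h⟩ : Fin n) = i then 1 else 0 := by
  simp [coord_of_lt h, E, eq_comm]

def planeForm (n : ℕ) (x y : Fin n → ℝ) : ℝ :=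
  coord n x 0 * coord n y 0 + coord n x 1 * coord n y 1

def swapForm (n : ℕ) (x y : Fin n → ℝ) : ℝ :=
  coord n x 0 * coord n y 1 + coord n x 1 * coord n y 0

def diagForm (n : ℕ) (x y : Fin n → ℝ) : ℝ :=
  coord n x 0 * coord n y 0 - coord n x 1 * coord n y 1

lemma sum_planeForm_E (h : 2 ≤ n) : ∑ i, planeForm n (E n i) (E n i) = 2 := by
  simp [planeForm, coord_E (by omega : 0 < n), coord_E (by omega : 1 < n), Finset.sum_add_distrib]
  norm_num

lemma sum_swapForm_E (h : 2 ≤ n) : ∑ i, swapForm n (E n i) (E n i) = 0 := by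
  simp [swapForm, coord_E (by omega : 0 < n), coord_E (by omega : 1 < n), Finset.sum_add_distrib]

lemma sum_diagForm_E (h : 2 ≤ n) : ∑ i, diagForm n (E n i) (E n i) = 0 := by
  simp [diagForm, coord_E (by omega : 0 < n), coord_E (by omega : 1 < n)]

lemma A1_eq (h : 2 ≤ n) (a μ : ℝ) (x : Fin n → ℝ) :
    A1 n a μ x
      = a • x + μ • (coord n x 1 • E n ⟨0, by omega⟩ + coord n x 0 • E n ⟨1, by omega⟩) := by
  funext ⟨i, hi⟩
  simp only [A1, E, Pi.add_apply, Pi.smul_apply, smul_eq_mul, Fin.mk.injEq]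
  split_ifs <;> subst_vars <;> first | omega | ring

lemma A2_eq (h : 2 ≤ n) (b μ : ℝ) (x : Fin n → ℝ) :
    A2 n b μ x
      = b • x + μ • (coord n x 0 • E n ⟨0, by omega⟩ - coord n x 1 • E n ⟨1, by omega⟩) := by
  funext ⟨i, hi⟩
  simp only [A2, E, Pi.add_apply, Pi.sub_apply, Pi.smul_apply, smul_eq_mul, Fin.mk.injEq,
    coord_of_lt (by omega : 0 < n), coord_of_lt (by omega : 1 < n)]
  split_ifs <;> subst_vars <;> first | omega | ring

lemma gg_A1 (h : 2 ≤ n) (a μ : ℝ) (x y : Fin n → ℝ) :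
    gg n (A1 n a μ x) y = a * gg n x y + μ * swapForm n x y := by
  simp only [A1_eq h, gg_add_left, gg_smul_left, gg_E_left, swapForm,
    coord_of_lt (by omega : 0 < n), coord_of_lt (by omega : 1 < n)]
  ring

lemma gg_A2 (h : 2 ≤ n) (b μ : ℝ) (x y : Fin n → ℝ) :
    gg n (A2 n b μ x) y = b * gg n x y + μ * diagForm n x y := by
  simp only [A2_eq h, gg_add_left, gg_sub_left, gg_smul_left, gg_E_left, diagForm,
    coord_of_lt (by omega : 0 < n), coord_of_lt (by omega : 1 < n)]

lemma gg_A3 (c : ℝ) (x y : Fin n → ℝ) : gg n (A3 n c x) y = c * gg n x y :=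
  gg_smul_left c x y

lemma coord_A1_zero (h : 2 ≤ n) (a μ : ℝ) (x : Fin n → ℝ) :
    coord n (A1 n a μ x) 0 = a * coord n x 0 + μ * coord n x 1 := by
  simp [coord_of_lt (by omega : 0 < n), A1]

lemma coord_A1_one (h : 2 ≤ n) (a μ : ℝ) (x : Fin n → ℝ) :
    coord n (A1 n a μ x) 1 = μ * coord n x 0 + a * coord n x 1 := by
  simp [coord_of_lt (by omega : 1 < n), A1, coord_of_lt (by omega : 0 < n)]

lemma coord_A2_zero (h : 2 ≤ n) (b μ : ℝ) (x : Fin n → ℝ) :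
    coord n (A2 n b μ x) 0 = (b + μ) * coord n x 0 := by
  simp [coord_of_lt (by omega : 0 < n), A2]

lemma coord_A2_one (h : 2 ≤ n) (b μ : ℝ) (x : Fin n → ℝ) :
    coord n (A2 n b μ x) 1 = (b - μ) * coord n x 1 := by
  simp [coord_of_lt (by omega : 1 < n), A2]

lemma gg_A1_A1 (h : 2 ≤ n) (a μ : ℝ) (x y : Fin n → ℝ) :
    gg n (A1 n a μ x) (A1 n a μ y)
      = a ^ 2 * gg n x y + 2 * a * μ * swapForm n x y + μ ^ 2 * planeForm n x y := by
  rw [gg_A1 h, gg_comm x, gg_A1 h, gg_comm y]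
  simp only [swapForm, planeForm, coord_A1_zero h, coord_A1_one h]
  ring

lemma gg_A2_A2 (h : 2 ≤ n) (b μ : ℝ) (x y : Fin n → ℝ) :
    gg n (A2 n b μ x) (A2 n b μ y)
      = b ^ 2 * gg n x y + 2 * b * μ * diagForm n x y + μ ^ 2 * planeForm n x y := by
  rw [gg_A2 h, gg_comm x, gg_A2 h, gg_comm y]
  simp only [diagForm, planeForm, coord_A2_zero h, coord_A2_one h]
  ring

lemma gg_A3_A3 (c : ℝ) (x y : Fin n → ℝ) :
    gg n (A3 n c x) (A3 n c y) = c ^ 2 * gg n x y := by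
  rw [gg_A3, gg_comm, gg_A3, gg_comm]
  ring

lemma trace_A1 (h : 2 ≤ n) (a μ : ℝ) : ∑ i, gg n (A1 n a μ (E n i)) (E n i) = n * a := by
  simp [gg_A1 h, Finset.sum_add_distrib, ← Finset.mul_sum, sum_swapForm_E h, gg_E_E, mul_comm]

lemma trace_A2 (h : 2 ≤ n) (b μ : ℝ) : ∑ i, gg n (A2 n b μ (E n i)) (E n i) = n * b := by
  simp [gg_A2 h, Finset.sum_add_distrib, ← Finset.mul_sum, sum_diagForm_E h, gg_E_E, mul_comm]

lemma trace_A3 (c : ℝ) : ∑ i, gg n (A3 n c (E n i)) (E n i) = n * c := by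
  simp [gg_A3, gg_E_E, mul_comm]

def gaussTerm (n : ℕ) (B : (Fin n → ℝ) → (Fin n → ℝ) → ℝ) (X Y Z W : Fin n → ℝ) : ℝ :=
  B X W * B Y Z - B X Z * B Y W

lemma Rt_eq_gaussTerm (a b c μ k : ℝ) (X Y Z W : Fin n → ℝ) :
    Rt n a b c μ k X Y Z W
      = gaussTerm n (fun x y => gg n (A1 n a μ x) y) X Y Z W
        + gaussTerm n (fun x y => gg n (A2 n b μ x) y) X Y Z W
        + gaussTerm n (fun x y => gg n (A3 n c x) y) X Y Z W + k * gaussTerm n (gg n) X Y Z W :=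
  rfl

lemma Rt_eq (h : 2 ≤ n) (a b c μ k : ℝ) (X Y Z W : Fin n → ℝ) :
    Rt n a b c μ k X Y Z W
      = gaussTerm n (fun x y => a * gg n x y + μ * swapForm n x y) X Y Z W
        + gaussTerm n (fun x y => b * gg n x y + μ * diagForm n x y) X Y Z W
        + (c ^ 2 + k) * gaussTerm n (gg n) X Y Z W := by
  simp only [Rt, gaussTerm, gg_A1 h, gg_A2 h, gg_A3]
  ring

lemma sum_gaussTerm_E (A : (Fin n → ℝ) → Fin n → ℝ) (hA : ∀ x y, gg n (A x) y = gg n x (A y))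
    (X Y : Fin n → ℝ) :
    ∑ i, gaussTerm n (fun x y => gg n (A x) y) (E n i) X Y (E n i)
      = (∑ i, gg n (A (E n i)) (E n i)) * gg n (A X) Y - gg n (A X) (A Y) := by
  simp only [gaussTerm]
  rw [Finset.sum_sub_distrib, Finset.sum_mul]
  congr 1
  simp only [hA _ Y, gg_E_left, gg_E_right]
  exact Finset.sum_congr rfl fun _ _ => mul_comm _ _

lemma Ricc_eq (h : 2 ≤ n) (a b c μ k : ℝ) (X Y : Fin n → ℝ) :
    Ricc n a b c μ k X Y
      = (n - 1) * (a ^ 2 + b ^ 2 + c ^ 2 + k) * gg n X Y + (n - 2) * a * μ * swapForm n X Y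
        + (n - 2) * b * μ * diagForm n X Y - 2 * μ ^ 2 * planeForm n X Y := by
  have symm1 : ∀ x y, gg n (A1 n a μ x) y = gg n x (A1 n a μ y) := fun x y => by
    rw [gg_comm x, gg_A1 h, gg_A1 h, gg_comm, swapForm, swapForm]; ring
  have symm2 : ∀ x y, gg n (A2 n b μ x) y = gg n x (A2 n b μ y) := fun x y => by
    rw [gg_comm x, gg_A2 h, gg_A2 h, gg_comm, diagForm, diagForm]; ring
  have symm3 : ∀ x y, gg n (A3 n c x) y = gg n x (A3 n c y) := fun x y => by
    rw [gg_comm x, gg_A3, gg_A3, gg_comm]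
  simp only [Ricc, Rt_eq_gaussTerm, Finset.sum_add_distrib, ← Finset.mul_sum]
  rw [sum_gaussTerm_E _ symm1, sum_gaussTerm_E _ symm2, sum_gaussTerm_E _ symm3,
    sum_gaussTerm_E (fun x => x) (fun _ _ => rfl), trace_A1 h, trace_A2 h, trace_A3,
    gg_A1_A1 h, gg_A2_A2 h, gg_A3_A3, gg_A1 h, gg_A2 h, gg_A3, sum_gg_E_E]
  ring

lemma tau_eq (h : 2 ≤ n) (a b c μ k : ℝ) :
    tau n a b c μ k = n * (n - 1) * (a ^ 2 + b ^ 2 + c ^ 2 + k) - 4 * μ ^ 2 := by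
  simp only [tau, Ricc_eq h, Finset.sum_add_distrib, Finset.sum_sub_distrib, ← Finset.mul_sum,
    sum_gg_E_E, sum_swapForm_E h, sum_diagForm_E h, sum_planeForm_E h]
  ring

/-- The Weyl part of `KN q q` (whose Ricci tensor is `2 q` and scalar curvature `4`). -/
def planeWeyl (n : ℕ) (X Y Z W : Fin n → ℝ) : ℝ :=
  KN n (planeForm n) (planeForm n) X Y Z W - 2 / ((n : ℝ) - 2) * KN n (gg n) (planeForm n) X Y Z W
    + 2 / (((n : ℝ) - 1) * ((n : ℝ) - 2)) * KN n (gg n) (gg n) X Y Z W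

lemma Ct_eq (h : 3 ≤ n) (a b c μ k : ℝ) (X Y Z W : Fin n → ℝ) :
    Ct n a b c μ k X Y Z W = -μ ^ 2 * planeWeyl n X Y Z W := by
  have hn : (3 : ℝ) ≤ n := by exact_mod_cast h
  have h1 : (n : ℝ) - 1 ≠ 0 := by linarith
  have h2 : (n : ℝ) - 2 ≠ 0 := by linarith
  simp only [Ct, planeWeyl, KN, Rt_eq (by omega : 2 ≤ n), Ricc_eq (by omega : 2 ≤ n),
    tau_eq (by omega : 2 ≤ n), gaussTerm, swapForm, diagForm, planeForm]
  field_simp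
  ring

lemma gg_wedge (X Y Z W : Fin n → ℝ) :
    gg n (wedge n (gg n) X Y Z) W = gg n Y Z * gg n X W - gg n X Z * gg n Y W := by
  simp only [wedge, gg, sub_mul, mul_assoc, Finset.sum_sub_distrib, ← Finset.mul_sum]

lemma coord_wedge {j : ℕ} (h : j < n) (X Y Z : Fin n → ℝ) :
    coord n (wedge n (gg n) X Y Z) j = gg n Y Z * coord n X j - gg n X Z * coord n Y j := by
  simp only [coord_of_lt h, wedge]

lemma curvOp_eq_of_gg {T : (Fin n → ℝ) → (Fin n → ℝ) → (Fin n → ℝ) → (Fin n → ℝ) → ℝ}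
    {V : (Fin n → ℝ) → (Fin n → ℝ) → (Fin n → ℝ) → Fin n → ℝ}
    (hT : ∀ X Y Z W, T X Y Z W = gg n (V X Y Z) W) : curvOp n T = V := by
  funext X Y Z j
  rw [curvOp, hT, gg_E_right]

lemma gg_curvOp_of_eq_gg {T : (Fin n → ℝ) → (Fin n → ℝ) → (Fin n → ℝ) → (Fin n → ℝ) → ℝ}
    {V : (Fin n → ℝ) → (Fin n → ℝ) → (Fin n → ℝ) → Fin n → ℝ}
    (hT : ∀ X Y Z W, T X Y Z W = gg n (V X Y Z) W) (X Y Z W : Fin n → ℝ) :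
    gg n (curvOp n T X Y Z) W = T X Y Z W := by
  rw [curvOp_eq_of_gg hT, hT]

lemma Rt_eq_gg_wedge (a b c μ k : ℝ) (X Y Z W : Fin n → ℝ) :
    Rt n a b c μ k X Y Z W
      = gg n (wedge n (gg n) (A1 n a μ X) (A1 n a μ Y) Z
          + wedge n (gg n) (A2 n b μ X) (A2 n b μ Y) Z
          + wedge n (gg n) (A3 n c X) (A3 n c Y) Z + k • wedge n (gg n) X Y Z) W := by
  simp only [Rt, gg_add_left, gg_smul_left, gg_wedge]
  ring

lemma gg_curvOp_Rt (a b c μ k : ℝ) (X Y Z W : Fin n → ℝ) :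
    gg n (curvOp n (Rt n a b c μ k) X Y Z) W = Rt n a b c μ k X Y Z W :=
  gg_curvOp_of_eq_gg (Rt_eq_gg_wedge a b c μ k) X Y Z W

lemma coord_curvOp {j : ℕ} (h : j < n)
    (T : (Fin n → ℝ) → (Fin n → ℝ) → (Fin n → ℝ) → (Fin n → ℝ) → ℝ) (X Y Z : Fin n → ℝ) :
    coord n (curvOp n T X Y Z) j = T X Y Z (E n ⟨j, h⟩) :=
  coord_of_lt h _

lemma RC_eq_neg_sq_mul (h : 3 ≤ n) (a b c μ k : ℝ) (X1 X2 X3 X4 X Y : Fin n → ℝ) :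
    RC n a b c μ k X1 X2 X3 X4 X Y
      = -μ ^ 2 * dotT n (curvOp n (Rt n a b c μ k)) (planeWeyl n) X1 X2 X3 X4 X Y := by
  simp only [RC, dotT, Ct_eq h]
  ring

lemma Q_Ct_eq_neg_sq_mul (h : 3 ≤ n) (a b c μ k : ℝ) (X1 X2 X3 X4 X Y : Fin n → ℝ) :
    Q n (gg n) (Ct n a b c μ k) X1 X2 X3 X4 X Y
      = -μ ^ 2 * Q n (gg n) (planeWeyl n) X1 X2 X3 X4 X Y := by
  simp only [Q, dotT, Ct_eq h]
  ring

lemma RC_eq_mul_Q_of_a_b_eq_zero (h : 3 ≤ n) (c μ k : ℝ) (X1 X2 X3 X4 X Y : Fin n → ℝ) :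
    RC n 0 0 c μ k X1 X2 X3 X4 X Y
      = (k + c ^ 2) * Q n (gg n) (Ct n 0 0 c μ k) X1 X2 X3 X4 X Y := by
  rw [RC_eq_neg_sq_mul h, Q_Ct_eq_neg_sq_mul h]
  simp only [Q, dotT, planeWeyl, KN, planeForm, gg_curvOp_Rt, gg_comm _ (curvOp _ _ _ _ _),
    gg_wedge, gg_comm _ (wedge _ _ _ _ _), coord_curvOp (by omega : 0 < n),
    coord_curvOp (by omega : 1 < n), coord_wedge (by omega : 0 < n), coord_wedge (by omega : 1 < n)]
  simp only [Rt_eq (by omega : 2 ≤ n), gaussTerm, swapForm, diagForm, gg_E_right]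
  simp (disch := omega) only [coord_of_lt, E, Fin.mk.injEq]
  norm_num
  ring

lemma RC_and_Q_at_basis (h : 3 ≤ n) (a b c μ k : ℝ) :
    RC n a b c μ k (E n ⟨0, by omega⟩) (E n ⟨1, by omega⟩) (E n ⟨0, by omega⟩)
        (E n ⟨2, by omega⟩) (E n ⟨0, by omega⟩) (E n ⟨2, by omega⟩)
        = -(2 * (n - 3) / (n - 2)) * μ ^ 3 * a
      ∧ Q n (gg n) (Ct n a b c μ k) (E n ⟨0, by omega⟩) (E n ⟨1, by omega⟩) (E n ⟨0, by omega⟩)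
        (E n ⟨2, by omega⟩) (E n ⟨0, by omega⟩) (E n ⟨2, by omega⟩) = 0 := by
  have h2 : (n : ℝ) - 2 ≠ 0 := by
    have : (3 : ℝ) ≤ n := by exact_mod_cast h
    linarith
  rw [RC_eq_neg_sq_mul h, Q_Ct_eq_neg_sq_mul h]
  simp only [Q, dotT, planeWeyl, KN, planeForm, gg_curvOp_Rt, gg_comm _ (curvOp _ _ _ _ _),
    gg_wedge, gg_comm _ (wedge _ _ _ _ _), coord_curvOp (by omega : 0 < n),
    coord_curvOp (by omega : 1 < n), coord_wedge (by omega : 0 < n), coord_wedge (by omega : 1 < n)]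
  simp only [Rt_eq (by omega : 2 ≤ n), gaussTerm, swapForm, diagForm, gg_E_right]
  simp (disch := omega) only [coord_of_lt, E, Fin.mk.injEq]
  norm_num
  field_simp
  ring

lemma RC_and_Q_at_rotated_basis (h : 3 ≤ n) (a b c μ k : ℝ) :
    RC n a b c μ k (E n ⟨0, by omega⟩ + E n ⟨1, by omega⟩) (E n ⟨0, by omega⟩ - E n ⟨1, by omega⟩)
        (E n ⟨0, by omega⟩ + E n ⟨1, by omega⟩) (E n ⟨2, by omega⟩)
        (E n ⟨0, by omega⟩ + E n ⟨1, by omega⟩) (E n ⟨2, by omega⟩)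
        = -(8 * (n - 3) / (n - 2)) * μ ^ 3 * b
      ∧ Q n (gg n) (Ct n a b c μ k) (E n ⟨0, by omega⟩ + E n ⟨1, by omega⟩)
        (E n ⟨0, by omega⟩ - E n ⟨1, by omega⟩) (E n ⟨0, by omega⟩ + E n ⟨1, by omega⟩)
        (E n ⟨2, by omega⟩) (E n ⟨0, by omega⟩ + E n ⟨1, by omega⟩) (E n ⟨2, by omega⟩) = 0 := by
  have h2 : (n : ℝ) - 2 ≠ 0 := by
    have : (3 : ℝ) ≤ n := by exact_mod_cast h
    linarith
  rw [RC_eq_neg_sq_mul h, Q_Ct_eq_neg_sq_mul h]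
  simp only [Q, dotT, planeWeyl, KN, planeForm, gg_curvOp_Rt, gg_comm _ (curvOp _ _ _ _ _),
    gg_wedge, gg_comm _ (wedge _ _ _ _ _), coord_curvOp (by omega : 0 < n),
    coord_curvOp (by omega : 1 < n), coord_wedge (by omega : 0 < n), coord_wedge (by omega : 1 < n)]
  simp only [Rt_eq (by omega : 2 ≤ n), gaussTerm, swapForm, diagForm, gg_E_right, gg_E_left,
    gg_add_left, gg_sub_left]
  simp (disch := omega) only [coord_of_lt, E, Fin.mk.injEq, Pi.add_apply, Pi.sub_apply]
  norm_num
  field_simp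
  ring

end

/-- `R·C` and `Q(g,C)` are linearly dependent iff `μ = 0` or
`a = 0` and `b = 0`; and if `a = 0` and `b = 0` then `R·C = (k̃ + c²) Q(g,C)`. -/
theorem statement_11 (n : ℕ) (hn : 4 ≤ n) (a b c μ k : ℝ) :
    ((∃ L : ℝ, ∀ X1 X2 X3 X4 X Y : Fin n → ℝ,
        RC n a b c μ k X1 X2 X3 X4 X Y
          = L * Q n (gg n) (Ct n a b c μ k) X1 X2 X3 X4 X Y)
      ↔ (μ = 0 ∨ (a = 0 ∧ b = 0)))
    ∧ ((a = 0 ∧ b = 0) →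
        ∀ X1 X2 X3 X4 X Y : Fin n → ℝ,
          RC n a b c μ k X1 X2 X3 X4 X Y
            = (k + c ^ 2) * Q n (gg n) (Ct n a b c μ k) X1 X2 X3 X4 X Y) := by
  have h3 : 3 ≤ n := by omega
  have of_a_b_eq_zero : a = 0 ∧ b = 0 → ∀ X1 X2 X3 X4 X Y : Fin n → ℝ,
      RC n a b c μ k X1 X2 X3 X4 X Y = (k + c ^ 2) * Q n (gg n) (Ct n a b c μ k) X1 X2 X3 X4 X Y := by
    rintro ⟨rfl, rfl⟩
    exact RC_eq_mul_Q_of_a_b_eq_zero h3 c μ k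
  refine ⟨⟨fun ⟨L, hL⟩ => ?_, ?_⟩, of_a_b_eq_zero⟩
  · refine or_iff_not_imp_left.2 fun hμ => ?_
    have hcoeff : ∀ m : ℝ, m ≠ 0 → -(m * (n - 3) / (n - 2)) * μ ^ 3 ≠ 0 := fun m hm => by
      have hn' : (4 : ℝ) ≤ n := by exact_mod_cast hn
      exact mul_ne_zero (neg_ne_zero.2 (div_ne_zero (mul_ne_zero hm (by linarith)) (by linarith)))
        (pow_ne_zero 3 hμ)
    have ha : -(2 * (n - 3) / (n - 2)) * μ ^ 3 * a = 0 := by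
      obtain ⟨hRC, hQ⟩ := RC_and_Q_at_basis h3 a b c μ k
      rw [← hRC, hL, hQ, mul_zero]
    have hb : -(8 * (n - 3) / (n - 2)) * μ ^ 3 * b = 0 := by
      obtain ⟨hRC, hQ⟩ := RC_and_Q_at_rotated_basis h3 a b c μ k
      rw [← hRC, hL, hQ, mul_zero]
    exact ⟨(mul_eq_zero.1 ha).resolve_left (hcoeff 2 two_ne_zero),
      (mul_eq_zero.1 hb).resolve_left (hcoeff 8 (by norm_num))⟩
  · rintro (hμ | hab)
    · exact ⟨0, fun X1 X2 X3 X4 X Y => by rw [RC_eq_neg_sq_mul h3, hμ]; ring⟩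
    · exact ⟨k + c ^ 2, of_a_b_eq_zero hab⟩

end Wintgen
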